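/- Let P ∈ ℝ^{n×n} be symmetric positive definite and λ ∈ [0, 1) be such that A_K(𝒥)^⊤ P A_K(𝒥) ⪯ λ P for every subset 𝒥 ⊆ {1, …, m}. Then for every e ∈ ℝ^n and every v ∈ ℝ^m with ‖v‖_∞ ≤ 1, f(e, v)^⊤ P f(e, v) ≤ λ · e^⊤ P e. -/

import Mathlib

open Matrix

/-- The scalar saturation function `sat(x) = sign(x) · min(|x|, 1)`
(saturation bounds normalized to 1). -/
noncomputable def sat (x : ℝ) : ℝ := Real.sign x * min |x| 1

/-- The componentwise saturation function `φ : ℝ^m → ℝ^m`. -/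
noncomputable def satVec {m : ℕ} (u : Fin m → ℝ) : Fin m → ℝ := fun j => sat (u j)

/-- The saturated error dynamics `f(e, v) = A e + B (φ(K e + v) − v)`. -/
noncomputable def errDyn {n m : ℕ} (A : Matrix (Fin n) (Fin n) ℝ)
    (B : Matrix (Fin n) (Fin m) ℝ) (K : Matrix (Fin m) (Fin n) ℝ)
    (e : Fin n → ℝ) (v : Fin m → ℝ) : Fin n → ℝ :=
  A.mulVec e + B.mulVec (satVec (K.mulVec e + v) - v)

/-- `A_K(𝒥) = A + Σ_{j ∈ 𝒥} B_{(j)} K_j`. -/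
noncomputable def AK {n m : ℕ} (A : Matrix (Fin n) (Fin n) ℝ)
    (B : Matrix (Fin n) (Fin m) ℝ) (K : Matrix (Fin m) (Fin n) ℝ)
    (J : Finset (Fin m)) : Matrix (Fin n) (Fin n) ℝ :=
  A + ∑ j ∈ J, Matrix.vecMulVec (fun i => B i j) (K j)

/-!
Since `|v_j| ≤ 1`, each saturated channel satisfies `φ_j(Ke + v) − v_j = t_j (Ke)_j` with
`t_j ∈ [0, 1]`, so `f(e, v) = A e + Σ_j t_j (Ke)_j B_(j)` is a point of a parallelotope whose
vertices are the points `A_K(𝒥) e`. The quadratic form of `P` is convex, so its sublevel set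
`{x | xᵀ P x ≤ λ eᵀ P e}` is convex; it contains every vertex by hypothesis, hence all of the
parallelotope.
-/

lemma sat_eq_max_min (x : ℝ) : sat x = max (-1) (min x 1) := by
  rcases lt_trichotomy x 0 with h | rfl | h
  · rw [sat, Real.sign_of_neg h, abs_of_neg h]
    rcases le_total x (-1) with h1 | h1
    · rw [min_eq_right (by linarith), min_eq_left (by linarith), max_eq_left h1]; ring
    · rw [min_eq_left (by linarith), min_eq_left (by linarith), max_eq_right h1]; ring
  · simp [sat]
  · rw [sat, Real.sign_of_pos h, abs_of_pos h, one_mul, max_eq_right]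
    exact le_min (by linarith) (by linarith)

lemma sat_add_sub_mem_uIcc (a : ℝ) {b : ℝ} (hb : |b| ≤ 1) : sat (a + b) - b ∈ Set.uIcc 0 a := by
  obtain ⟨hb₁, hb₂⟩ := abs_le.mp hb
  rw [sat_eq_max_min, Set.mem_uIcc]
  rcases le_total 0 a with ha | ha
  · left; constructor <;> simp only [max_def, min_def] <;> split_ifs <;> linarith
  · right; constructor <;> simp only [max_def, min_def] <;> split_ifs <;> linarith

lemma exists_sat_add_sub_eq_mul (a : ℝ) {b : ℝ} (hb : |b| ≤ 1) :
    ∃ t ∈ Set.Icc (0 : ℝ) 1, sat (a + b) - b = t * a := by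
  have h := sat_add_sub_mem_uIcc a hb
  rw [← segment_eq_uIcc, segment_eq_image] at h
  obtain ⟨t, ht, h⟩ := h
  exact ⟨t, ht, by simpa using h.symm⟩

theorem Matrix.PosSemidef.convexOn_dotProduct_mulVec {n : Type*} [Fintype n]
    {P : Matrix n n ℝ} (hP : P.PosSemidef) :
    ConvexOn ℝ Set.univ fun x : n → ℝ => x ⬝ᵥ P *ᵥ x := by
  refine ⟨convex_univ, fun x _ y _ a b ha hb hab => ?_⟩
  have hxy := hP.dotProduct_mulVec_nonneg (x - y)
  simp only [star_trivial] at hxy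
  simp only [smul_eq_mul, mulVec_add, mulVec_smul, mulVec_sub, add_dotProduct, dotProduct_add,
    smul_dotProduct, dotProduct_smul, sub_dotProduct, dotProduct_sub] at hxy ⊢
  obtain rfl : b = 1 - a := by linarith
  -- `a q(x) + b q(y) - q(a x + b y) = a b q(x - y)` when `a + b = 1`
  nlinarith [mul_nonneg ha hb]

theorem Convex.add_sum_smul_mem_of_forall_subset {𝕜 E ι : Type*} [Ring 𝕜] [PartialOrder 𝕜]
    [IsOrderedRing 𝕜] [AddCommGroup E] [Module 𝕜 E] {S : Set E} (hS : Convex 𝕜 S)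
    (c : ι → E) (t : ι → 𝕜) (s : Finset ι) (ht : ∀ j ∈ s, t j ∈ Set.Icc 0 1) (x : E)
    (hx : ∀ J ⊆ s, x + ∑ j ∈ J, c j ∈ S) : x + ∑ j ∈ s, t j • c j ∈ S := by
  classical
  induction s using Finset.induction generalizing x with
  | empty => simpa using hx ∅ subset_rfl
  | @insert a s ha ih =>
    have ht' : ∀ j ∈ s, t j ∈ Set.Icc 0 1 := fun j hj => ht j (Finset.mem_insert_of_mem hj)
    have h₀ : x + ∑ j ∈ s, t j • c j ∈ S :=
      ih ht' x fun J hJ => hx J (hJ.trans (Finset.subset_insert a s))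
    have h₁ : x + ∑ j ∈ s, t j • c j + c a ∈ S := by
      rw [add_right_comm]
      refine ih ht' (x + c a) fun J hJ => ?_
      have haJ : a ∉ J := fun h => ha (hJ h)
      simpa [Finset.sum_insert haJ, add_assoc, add_comm (c a)] using
        hx (insert a J) (Finset.insert_subset_insert a hJ)
    simpa [Finset.sum_insert ha, add_left_comm, add_assoc, add_comm] using
      hS.add_smul_mem h₀ h₁ (ht a (Finset.mem_insert_self a s))

theorem Matrix.dotProduct_mulVec_mulVec_le_of_posSemidef_sub {n : Type*} [Fintype n]
    {P M : Matrix n n ℝ} {lam : ℝ} (h : (lam • P - Mᵀ * P * M).PosSemidef) (e : n → ℝ) :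
    M *ᵥ e ⬝ᵥ P *ᵥ (M *ᵥ e) ≤ lam * (e ⬝ᵥ P *ᵥ e) := by
  have hquad : e ⬝ᵥ (Mᵀ * P * M) *ᵥ e = M *ᵥ e ⬝ᵥ P *ᵥ (M *ᵥ e) := by
    rw [← mulVec_mulVec, ← mulVec_mulVec, dotProduct_mulVec, vecMul_transpose]
  have he := h.dotProduct_mulVec_nonneg e
  rw [star_trivial, sub_mulVec, smul_mulVec, dotProduct_sub, dotProduct_smul, smul_eq_mul,
    hquad] at he
  linarith

lemma AK_mulVec {n m : ℕ} (A : Matrix (Fin n) (Fin n) ℝ) (B : Matrix (Fin n) (Fin m) ℝ)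
    (K : Matrix (Fin m) (Fin n) ℝ) (J : Finset (Fin m)) (e : Fin n → ℝ) :
    AK A B K J *ᵥ e = A *ᵥ e + ∑ j ∈ J, (K *ᵥ e) j • Bᵀ j := by
  simp only [AK, add_mulVec, sum_mulVec, vecMulVec_mulVec, op_smul_eq_smul]
  rfl

lemma errDyn_eq_add_sum {n m : ℕ} (A : Matrix (Fin n) (Fin n) ℝ) (B : Matrix (Fin n) (Fin m) ℝ)
    (K : Matrix (Fin m) (Fin n) ℝ) (e : Fin n → ℝ) (v : Fin m → ℝ) :
    errDyn A B K e v = A *ᵥ e + ∑ j, (sat ((K *ᵥ e) j + v j) - v j) • Bᵀ j := by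
  rw [errDyn, mulVec_eq_sum _ B]
  simp only [op_smul_eq_smul]
  rfl

theorem stmt3_general {n m : ℕ} (A : Matrix (Fin n) (Fin n) ℝ) (B : Matrix (Fin n) (Fin m) ℝ)
    (K : Matrix (Fin m) (Fin n) ℝ) (P : Matrix (Fin n) (Fin n) ℝ) (hP : P.PosDef)
    (lam : ℝ)
    (hcontr : ∀ J : Finset (Fin m),
      (lam • P - (AK A B K J)ᵀ * P * AK A B K J).PosSemidef)
    (e : Fin n → ℝ) (v : Fin m → ℝ) (hv : ∀ j, |v j| ≤ 1) :
    errDyn A B K e v ⬝ᵥ P.mulVec (errDyn A B K e v) ≤ lam * (e ⬝ᵥ P.mulVec e) := by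
  choose t ht hsat using fun j => exists_sat_add_sub_eq_mul ((K *ᵥ e) j) (hv j)
  have hf : errDyn A B K e v = A *ᵥ e + ∑ j, t j • (K *ᵥ e) j • Bᵀ j := by
    simp only [errDyn_eq_add_sum, hsat, mul_smul]
  have hcorner : ∀ J ⊆ Finset.univ, A *ᵥ e + ∑ j ∈ J, (K *ᵥ e) j • Bᵀ j ∈
      {x ∈ Set.univ | x ⬝ᵥ P *ᵥ x ≤ lam * (e ⬝ᵥ P *ᵥ e)} := fun J _ =>
    ⟨trivial, AK_mulVec A B K J e ▸ dotProduct_mulVec_mulVec_le_of_posSemidef_sub (hcontr J) e⟩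
  rw [hf]
  exact ((hP.posSemidef.convexOn_dotProduct_mulVec.convex_le _).add_sum_smul_mem_of_forall_subset
    _ t _ (fun j _ => ht j) _ hcorner).2

/-- If `P ≻ 0` and `λ ∈ [0, 1)` satisfy `A_K(𝒥)ᵀ P A_K(𝒥) ⪯ λ P` for every
subset `𝒥 ⊆ {1, …, m}`, then for every `e` and every `v` with `‖v‖_∞ ≤ 1`,
`f(e,v)ᵀ P f(e,v) ≤ λ · eᵀ P e`. -/
theorem stmt3 {n m : ℕ} (A : Matrix (Fin n) (Fin n) ℝ) (B : Matrix (Fin n) (Fin m) ℝ)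
    (K : Matrix (Fin m) (Fin n) ℝ) (P : Matrix (Fin n) (Fin n) ℝ) (hP : P.PosDef)
    (lam : ℝ) (hlam : lam ∈ Set.Ico (0 : ℝ) 1)
    (hcontr : ∀ J : Finset (Fin m),
      (lam • P - (AK A B K J)ᵀ * P * AK A B K J).PosSemidef)
    (e : Fin n → ℝ) (v : Fin m → ℝ) (hv : ∀ j, |v j| ≤ 1) :
    errDyn A B K e v ⬝ᵥ P.mulVec (errDyn A B K e v) ≤ lam * (e ⬝ᵥ P.mulVec e) :=
  stmt3_general A B K P hP lam hcontr e v hv
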